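/- arXiv:2404.14451 — 2 statements merged into one kernel-verified Lean document; each statement's English description precedes it below -/
import Mathlib

section
/- Let V(D) = ∫ p(x)·log D(x) dμ + ∫ q(x)·log(1 − D(x)) dμ over measurable functions D : α → (0,1), where p, q are densities. Then V is maximized by D*(x) = p(x)/(p(x)+q(x)), i.e., V(D) ≤ V(D*) for all admissible D. -/
/-! For fixed weights `a, b ≥ 0` the concave function `y ↦ a log y + b log (1 - y)` on `(0, 1)` is
maximised at `y = a / (a + b)`: with `s = a + b`, the tangent-line bound `log u ≤ u - 1` gives
`a log y ≤ a log (a / s) + (s y - a)` and `b log (1 - y) ≤ b log (b / s) + (s (1 - y) - b)`, and the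
linear corrections cancel. Integrating this pointwise inequality gives the theorem; the optimal
terms are squeezed between the integrable `p log D + q log (1 - D)` and `0`, hence integrable. -/

open MeasureTheory Real

lemma mul_log_le_mul_log_div_add {a s y : ℝ} (ha : 0 ≤ a) (hs : 0 < s) (hy : 0 < y) :
    a * log y ≤ a * log (a / s) + (s * y - a) := by
  rcases ha.eq_or_lt with rfl | ha
  · simp only [zero_mul, zero_div, log_zero, mul_zero, sub_zero, zero_add]
    positivity
  have hlog : log y - log (a / s) ≤ y / (a / s) - 1 := by
    rw [← log_div hy.ne' (by positivity)]
    exact log_le_sub_one_of_pos (by positivity)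
  have hscale : a * (y / (a / s) - 1) = s * y - a := by field_simp
  nlinarith [mul_le_mul_of_nonneg_left hlog ha.le]

lemma mul_log_add_mul_log_one_sub_le {a b y : ℝ} (ha : 0 ≤ a) (hb : 0 ≤ b)
    (hy : y ∈ Set.Ioo (0 : ℝ) 1) :
    a * log y + b * log (1 - y) ≤
      a * log (a / (a + b)) + b * log (1 - a / (a + b)) := by
  obtain ⟨hy0, hy1⟩ := hy
  rcases (add_nonneg ha hb).eq_or_lt with hs | hs
  · obtain ⟨rfl, rfl⟩ : a = 0 ∧ b = 0 := ⟨by linarith, by linarith⟩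
    simp
  have hcompl : 1 - a / (a + b) = b / (a + b) := by field_simp; ring
  rw [hcompl]
  linarith [mul_log_le_mul_log_div_add ha hs hy0,
    mul_log_le_mul_log_div_add hb hs (sub_pos.mpr hy1)]

lemma mul_log_div_add_nonpos {a b c : ℝ} (ha : 0 ≤ a) (hb : 0 ≤ b) (hc : 0 ≤ c) :
    c * log (a / (a + b)) ≤ 0 ∧ c * log (1 - a / (a + b)) ≤ 0 := by
  have h0 : 0 ≤ a / (a + b) := by positivity
  have h1 : a / (a + b) ≤ 1 := div_le_one_of_le₀ (by linarith) (by positivity)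
  exact ⟨mul_nonpos_of_nonneg_of_nonpos hc (log_nonpos h0 h1),
    mul_nonpos_of_nonneg_of_nonpos hc (log_nonpos (by linarith) (by linarith))⟩

theorem integral_mul_log_add_integral_mul_log_one_sub_le {α : Type*} [MeasurableSpace α]
    {μ : Measure α} {p q D : α → ℝ} (hpm : AEMeasurable p μ) (hqm : AEMeasurable q μ)
    (hp0 : 0 ≤ᵐ[μ] p) (hq0 : 0 ≤ᵐ[μ] q) (hD : ∀ᵐ x ∂μ, D x ∈ Set.Ioo (0 : ℝ) 1)
    (hpD : Integrable (fun x => p x * log (D x)) μ)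
    (hqD : Integrable (fun x => q x * log (1 - D x)) μ) :
    (∫ x, p x * log (D x) ∂μ) + ∫ x, q x * log (1 - D x) ∂μ ≤
      (∫ x, p x * log (p x / (p x + q x)) ∂μ) +
        ∫ x, q x * log (1 - p x / (p x + q x)) ∂μ := by
  set g₁ := fun x => p x * log (p x / (p x + q x))
  set g₂ := fun x => q x * log (1 - p x / (p x + q x))
  have hf : Integrable (fun x => p x * log (D x) + q x * log (1 - D x)) μ := hpD.add hqD
  have hle : ∀ᵐ x ∂μ, p x * log (D x) + q x * log (1 - D x) ≤ g₁ x + g₂ x := by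
    filter_upwards [hp0, hq0, hD] with x hpx hqx hDx
    exact mul_log_add_mul_log_one_sub_le hpx hqx hDx
  have hnonpos : ∀ᵐ x ∂μ, g₁ x ≤ 0 ∧ g₂ x ≤ 0 := by
    filter_upwards [hp0, hq0] with x hpx hqx
    exact ⟨(mul_log_div_add_nonpos hpx hqx hpx).1, (mul_log_div_add_nonpos hpx hqx hqx).2⟩
  have hD' : AEMeasurable (fun x => p x / (p x + q x)) μ := hpm.div (hpm.add hqm)
  have hg₁ : Integrable g₁ μ :=
    integrable_of_le_of_le (hpm.mul hD'.log).aestronglyMeasurable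
      (by filter_upwards [hle, hnonpos] with x h h' using by linarith [h'.2])
      (by filter_upwards [hnonpos] with x h using h.1) hf (integrable_zero _ _ μ)
  have hg₂ : Integrable g₂ μ :=
    integrable_of_le_of_le (hqm.mul (aemeasurable_const.sub hD').log).aestronglyMeasurable
      (by filter_upwards [hle, hnonpos] with x h h' using by linarith [h'.1])
      (by filter_upwards [hnonpos] with x h using h.2) hf (integrable_zero _ _ μ)
  rw [← integral_add hpD hqD, ← integral_add hg₁ hg₂]
  exact integral_mono_ae hf (hg₁.add hg₂) hle

theorem stmt_7_general {α : Type*} [MeasurableSpace α] (μ : Measure α)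
    (p q : α → ℝ) (hpm : Measurable p) (hqm : Measurable q)
    (hp0 : ∀ x, 0 ≤ p x) (hq0 : ∀ x, 0 ≤ q x)
    (V : (α → ℝ) → ℝ)
    (hV : ∀ D, V D = (∫ x, p x * Real.log (D x) ∂μ) +
                     (∫ x, q x * Real.log (1 - D x) ∂μ))
    (Dstar : α → ℝ) (hDstar : ∀ x, Dstar x = p x / (p x + q x)) :
    ∀ D : α → ℝ, Measurable D → (∀ x, D x ∈ Set.Ioo (0 : ℝ) 1) →
      Integrable (fun x => p x * Real.log (D x)) μ →
      Integrable (fun x => q x * Real.log (1 - D x)) μ →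
      V D ≤ V Dstar := by
  intro D _ hD hpD hqD
  rw [hV, hV, funext hDstar]
  exact integral_mul_log_add_integral_mul_log_one_sub_le hpm.aemeasurable hqm.aemeasurable
    (ae_of_all _ hp0) (ae_of_all _ hq0) (ae_of_all _ hD) hpD hqD

/-- Optimal-discriminator lemma: V(D) = ∫ p·log D + ∫ q·log(1−D) is maximized
over measurable D : α → (0,1) by D*(x) = p(x)/(p(x)+q(x)). -/
theorem stmt_7 {α : Type*} [MeasurableSpace α] (μ : Measure α) [SigmaFinite μ]
    (p q : α → ℝ) (hpm : Measurable p) (hqm : Measurable q)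
    (hp0 : ∀ x, 0 ≤ p x) (hq0 : ∀ x, 0 ≤ q x)
    (hp1 : ∫ x, p x ∂μ = 1) (hq1 : ∫ x, q x ∂μ = 1)
    (hpos : ∀ᵐ x ∂μ, 0 < p x + q x)
    (V : (α → ℝ) → ℝ)
    (hV : ∀ D, V D = (∫ x, p x * Real.log (D x) ∂μ) +
                     (∫ x, q x * Real.log (1 - D x) ∂μ))
    (Dstar : α → ℝ) (hDstar : ∀ x, Dstar x = p x / (p x + q x)) :
    ∀ D : α → ℝ, Measurable D → (∀ x, D x ∈ Set.Ioo (0 : ℝ) 1) →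
      Integrable (fun x => p x * Real.log (D x)) μ →
      Integrable (fun x => q x * Real.log (1 - D x)) μ →
      V D ≤ V Dstar :=
  stmt_7_general μ p q hpm hqm hp0 hq0 V hV Dstar hDstar
end

section
/- At the optimal discriminator D*(x) = p(x)/(p(x)+q(x)), the objective satisfies V(D*) = KL(p ‖ (p+q)/2) + KL(q ‖ (p+q)/2) − 2·log 2, i.e., V(D*) = 2·JSD(p‖q) − log 4; in particular V(D*) ≥ −log 4 with equality iff p = q a.e. -/
open MeasureTheory

/- With m = (p + q)/2, the identity p/(p + q) = (p/m)/2 turns V(D*) into A + B - 2 log 2, where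
A = ∫ p log (p/m) and B = ∫ q log (q/m). Because ∫ p = ∫ m, the integrand of A may be replaced by
m · klFun (p/m), and klFun x = x log x + 1 - x is nonnegative and vanishes only at x = 1; so A ≥ 0,
with equality iff p = m, i.e. p = q, almost everywhere. Likewise for B. -/

open Real InformationTheory

lemma mul_log_div_eq_mul_klFun_add {r m : ℝ} (hm : m ≠ 0) :
    r * log (r / m) = m * klFun (r / m) + (r - m) := by
  rw [klFun_apply]
  field_simp
  ring

section

variable {α : Type*} [MeasurableSpace α] {μ : Measure α} {r m s : α → ℝ}

theorem integral_mul_log_div_eq_sub_log_two (hr : Integrable r μ) (hr1 : ∫ x, r x ∂μ = 1)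
    (hs : ∀ᵐ x ∂μ, s x ≠ 0) (hi : Integrable (fun x => r x * log (r x / (s x / 2))) μ) :
    ∫ x, r x * log (r x / s x) ∂μ = ∫ x, r x * log (r x / (s x / 2)) ∂μ - log 2 := by
  have hae : ∀ᵐ x ∂μ, r x * log (r x / s x) = r x * log (r x / (s x / 2)) - r x * log 2 := by
    filter_upwards [hs] with x hsx
    rcases eq_or_ne (r x) 0 with h | h
    · simp [h]
    · rw [show r x / s x = r x / (s x / 2) / 2 by ring,
        log_div (div_ne_zero h (div_ne_zero hsx two_ne_zero)) two_ne_zero]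
      ring
  rw [integral_congr_ae hae, integral_sub hi (hr.mul_const _), integral_mul_const, hr1, one_mul]

theorem mul_log_div_ae_eq (hm : ∀ᵐ x ∂μ, 0 < m x) :
    (fun x => r x * log (r x / m x)) =ᵐ[μ] fun x => m x * klFun (r x / m x) + (r x - m x) := by
  filter_upwards [hm] with x hmx
  exact mul_log_div_eq_mul_klFun_add hmx.ne'

theorem integrable_mul_log_div_iff (hr : Integrable r μ) (hmi : Integrable m μ)
    (hm : ∀ᵐ x ∂μ, 0 < m x) :
    Integrable (fun x => r x * log (r x / m x)) μ ↔
      Integrable (fun x => m x * klFun (r x / m x)) μ := by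
  rw [integrable_congr (mul_log_div_ae_eq hm), integrable_add_iff_integrable_left' (hr.sub' hmi)]

theorem integral_mul_log_div_eq_integral_mul_klFun (hr : Integrable r μ) (hmi : Integrable m μ)
    (hrm : ∫ x, r x ∂μ = ∫ x, m x ∂μ) (hm : ∀ᵐ x ∂μ, 0 < m x) :
    ∫ x, r x * log (r x / m x) ∂μ = ∫ x, m x * klFun (r x / m x) ∂μ := by
  by_cases hi : Integrable (fun x => r x * log (r x / m x)) μ
  · rw [integral_congr_ae (mul_log_div_ae_eq hm),
      integral_add ((integrable_mul_log_div_iff hr hmi hm).1 hi) (hr.sub' hmi),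
      integral_sub hr hmi, hrm, sub_self, add_zero]
  · rw [integral_undef hi, integral_undef (mt (integrable_mul_log_div_iff hr hmi hm).2 hi)]

theorem integral_mul_log_div_nonneg (hr0 : ∀ᵐ x ∂μ, 0 ≤ r x) (hr : Integrable r μ)
    (hmi : Integrable m μ) (hrm : ∫ x, r x ∂μ = ∫ x, m x ∂μ) (hm : ∀ᵐ x ∂μ, 0 < m x) :
    0 ≤ ∫ x, r x * log (r x / m x) ∂μ := by
  rw [integral_mul_log_div_eq_integral_mul_klFun hr hmi hrm hm]
  refine integral_nonneg_of_ae ?_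
  filter_upwards [hr0, hm] with x hrx hmx
  exact mul_nonneg hmx.le (klFun_nonneg (div_nonneg hrx hmx.le))

theorem integral_mul_log_div_eq_zero_iff (hr0 : ∀ᵐ x ∂μ, 0 ≤ r x) (hr : Integrable r μ)
    (hmi : Integrable m μ) (hrm : ∫ x, r x ∂μ = ∫ x, m x ∂μ) (hm : ∀ᵐ x ∂μ, 0 < m x)
    (hi : Integrable (fun x => r x * log (r x / m x)) μ) :
    ∫ x, r x * log (r x / m x) ∂μ = 0 ↔ r =ᵐ[μ] m := by
  have hnonneg : 0 ≤ᵐ[μ] fun x => m x * klFun (r x / m x) := by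
    filter_upwards [hr0, hm] with x hrx hmx
    exact mul_nonneg hmx.le (klFun_nonneg (div_nonneg hrx hmx.le))
  rw [integral_mul_log_div_eq_integral_mul_klFun hr hmi hrm hm,
    integral_eq_zero_iff_of_nonneg_ae hnonneg ((integrable_mul_log_div_iff hr hmi hm).1 hi)]
  refine Filter.eventually_congr ?_
  filter_upwards [hr0, hm] with x hrx hmx
  rw [Pi.zero_apply, mul_eq_zero, or_iff_right hmx.ne', klFun_eq_zero_iff (div_nonneg hrx hmx.le),
    div_eq_one_iff_eq hmx.ne']

theorem integral_mul_log_optimal_discriminator {p q : α → ℝ} (hp : Integrable p μ)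
    (hq : Integrable q μ) (hp1 : ∫ x, p x ∂μ = 1) (hq1 : ∫ x, q x ∂μ = 1)
    (hs : ∀ᵐ x ∂μ, p x + q x ≠ 0)
    (hip : Integrable (fun x => p x * log (p x / ((p x + q x) / 2))) μ)
    (hiq : Integrable (fun x => q x * log (q x / ((p x + q x) / 2))) μ) :
    (∫ x, p x * log (p x / (p x + q x)) ∂μ) + ∫ x, q x * log (1 - p x / (p x + q x)) ∂μ =
      (∫ x, p x * log (p x / ((p x + q x) / 2)) ∂μ) +
        (∫ x, q x * log (q x / ((p x + q x) / 2)) ∂μ) - 2 * log 2 := by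
  have h1D : ∀ᵐ x ∂μ, q x * log (1 - p x / (p x + q x)) = q x * log (q x / (p x + q x)) := by
    filter_upwards [hs] with x hx
    rw [one_sub_div hx, add_sub_cancel_left]
  rw [integral_congr_ae h1D, integral_mul_log_div_eq_sub_log_two hp hp1 hs hip,
    integral_mul_log_div_eq_sub_log_two hq hq1 hs hiq]
  ring

end

theorem stmt_8_general {α : Type*} [MeasurableSpace α] (μ : Measure α)
    (p q : α → ℝ)
    (hp0 : ∀ x, 0 ≤ p x) (hq0 : ∀ x, 0 ≤ q x)
    (hp1 : ∫ x, p x ∂μ = 1) (hq1 : ∫ x, q x ∂μ = 1)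
    (hpos : ∀ᵐ x ∂μ, 0 < p x + q x)
    (V : (α → ℝ) → ℝ)
    (hV : ∀ D, V D = (∫ x, p x * Real.log (D x) ∂μ) +
                     (∫ x, q x * Real.log (1 - D x) ∂μ))
    (Dstar : α → ℝ) (hDstar : ∀ x, Dstar x = p x / (p x + q x))
    (hip : Integrable (fun x => p x * Real.log (p x / ((p x + q x) / 2))) μ)
    (hiq : Integrable (fun x => q x * Real.log (q x / ((p x + q x) / 2))) μ) :
    V Dstar = (∫ x, p x * Real.log (p x / ((p x + q x) / 2)) ∂μ) +
              (∫ x, q x * Real.log (q x / ((p x + q x) / 2)) ∂μ) - 2 * Real.log 2 ∧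
    -Real.log 4 ≤ V Dstar ∧
    (V Dstar = -Real.log 4 ↔ p =ᵐ[μ] q) := by
  have hpi : Integrable p μ := .of_integral_ne_zero (by simp [hp1])
  have hqi : Integrable q μ := .of_integral_ne_zero (by simp [hq1])
  have hmi : Integrable (fun x => (p x + q x) / 2) μ := (hpi.add hqi).div_const 2
  have hm1 : ∫ x, (p x + q x) / 2 ∂μ = 1 := by
    rw [integral_div, integral_add hpi hqi, hp1, hq1]
    norm_num
  have hm : ∀ᵐ x ∂μ, 0 < (p x + q x) / 2 := hpos.mono fun x hx => half_pos hx
  have hVD : V Dstar = (∫ x, p x * log (p x / ((p x + q x) / 2)) ∂μ) +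
      (∫ x, q x * log (q x / ((p x + q x) / 2)) ∂μ) - 2 * log 2 := by
    simp only [hV, hDstar]
    exact integral_mul_log_optimal_discriminator hpi hqi hp1 hq1 (hpos.mono fun x hx => hx.ne')
      hip hiq
  have hA := integral_mul_log_div_nonneg (.of_forall hp0) hpi hmi (hp1.trans hm1.symm) hm
  have hB := integral_mul_log_div_nonneg (.of_forall hq0) hqi hmi (hq1.trans hm1.symm) hm
  have hA0 : ∫ x, p x * log (p x / ((p x + q x) / 2)) ∂μ = 0 ↔ p =ᵐ[μ] q :=
    (integral_mul_log_div_eq_zero_iff (.of_forall hp0) hpi hmi (hp1.trans hm1.symm) hm hip).trans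
      (Filter.eventually_congr (.of_forall fun x => by constructor <;> intro h <;> linarith))
  have hB0 : ∫ x, q x * log (q x / ((p x + q x) / 2)) ∂μ = 0 ↔ q =ᵐ[μ] p :=
    (integral_mul_log_div_eq_zero_iff (.of_forall hq0) hqi hmi (hq1.trans hm1.symm) hm hiq).trans
      (Filter.eventually_congr (.of_forall fun x => by constructor <;> intro h <;> linarith))
  have hlog4 : log 4 = 2 * log 2 := by
    rw [show (4 : ℝ) = 2 ^ 2 by norm_num, log_pow, Nat.cast_ofNat]
  refine ⟨hVD, by linarith, fun h => hA0.1 (by linarith), fun h => ?_⟩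
  rw [hVD, hA0.2 h, hB0.2 h.symm, hlog4]
  ring

/-- At the optimal discriminator D* = p/(p+q),
V(D*) = KL(p‖(p+q)/2) + KL(q‖(p+q)/2) − 2·log 2 = 2·JSD(p‖q) − log 4;
in particular V(D*) ≥ −log 4 with equality iff p = q a.e. -/
theorem stmt_8 {α : Type*} [MeasurableSpace α] (μ : Measure α) [SigmaFinite μ]
    (p q : α → ℝ) (hpm : Measurable p) (hqm : Measurable q)
    (hp0 : ∀ x, 0 ≤ p x) (hq0 : ∀ x, 0 ≤ q x)
    (hp1 : ∫ x, p x ∂μ = 1) (hq1 : ∫ x, q x ∂μ = 1)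
    (hpos : ∀ᵐ x ∂μ, 0 < p x + q x)
    (V : (α → ℝ) → ℝ)
    (hV : ∀ D, V D = (∫ x, p x * Real.log (D x) ∂μ) +
                     (∫ x, q x * Real.log (1 - D x) ∂μ))
    (Dstar : α → ℝ) (hDstar : ∀ x, Dstar x = p x / (p x + q x))
    (hip : Integrable (fun x => p x * Real.log (p x / ((p x + q x) / 2))) μ)
    (hiq : Integrable (fun x => q x * Real.log (q x / ((p x + q x) / 2))) μ)
    (hiD : Integrable (fun x => p x * Real.log (Dstar x)) μ)
    (hiD' : Integrable (fun x => q x * Real.log (1 - Dstar x)) μ) :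
    V Dstar = (∫ x, p x * Real.log (p x / ((p x + q x) / 2)) ∂μ) +
              (∫ x, q x * Real.log (q x / ((p x + q x) / 2)) ∂μ) - 2 * Real.log 2 ∧
    -Real.log 4 ≤ V Dstar ∧
    (V Dstar = -Real.log 4 ↔ p =ᵐ[μ] q) :=
  stmt_8_general μ p q hp0 hq0 hp1 hq1 hpos V hV Dstar hDstar hip hiq
end
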